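/- arXiv:1301.7503 — 3 statements merged into one kernel-verified Lean document; each statement's English description precedes it below -/
import Mathlib

section
/- For all ℓ ≥ 1 and n ≥ 1, the number z(ℓ,n) of stopping matrices in S^(ℓ,n) satisfies the recursion z(ℓ,n) = ℓ^n − Σ_{c=1}^{min(ℓ,n)} c! · C(ℓ,c) · C(n,c) · z(ℓ−c, n−c), with the convention z(0,0)=1 and z(ℓ,0)=1, z(0,n)=0 for n ≥ 1 as appropriate boundary cases. -/
/-- Column weight: number of ones in column `j`. -/
def colWt {l n : ℕ} (M : Fin l → Fin n → Bool) (j : Fin n) : ℕ :=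
  (Finset.univ.filter (fun i => M i j)).card

/-- Row weight: number of ones in row `i`. -/
def rowWt {l n : ℕ} (M : Fin l → Fin n → Bool) (i : Fin l) : ℕ :=
  (Finset.univ.filter (fun j => M i j)).card

/-- `M ∈ S^(l,n)`: every column has Hamming weight exactly 1. -/
def isS {l n : ℕ} (M : Fin l → Fin n → Bool) : Prop :=
  ∀ j, colWt M j = 1

/-- Stopping matrix: no row has Hamming weight exactly 1. -/
def isStop {l n : ℕ} (M : Fin l → Fin n → Bool) : Prop :=
  ∀ i, rowWt M i ≠ 1

instance {l n : ℕ} : DecidablePred (isS (l := l) (n := n)) := fun _ =>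
  inferInstanceAs (Decidable (∀ _, _ = _))

instance {l n : ℕ} : DecidablePred (isStop (l := l) (n := n)) := fun _ =>
  inferInstanceAs (Decidable (∀ _, _ ≠ _))

/-- `z l n`: number of stopping matrices in `S^(l,n)`. -/
def z (l n : ℕ) : ℕ :=
  Fintype.card {M : Fin l → Fin n → Bool // isS M ∧ isStop M}

/-!
Identify a matrix of `S^(ℓ,n)` with the function sending each column to the row of its one;
it is stopping iff no row has exactly one preimage. Sort the `ℓ^n` functions by the set `R` of
rows with exactly one preimage. With `|R| = c`, such a function amounts to the injection
`σ : R ↪ columns` picking those preimages (`n!/(n-c)!` choices) together with a function from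
the other `n - c` columns to the other `ℓ - c` rows having no singleton fibre
(`z(ℓ-c, n-c)` choices). Hence `ℓ^n = ∑_c C(ℓ,c) · n!/(n-c)! · z(ℓ-c, n-c)`, and the `c = 0`
term is `z(ℓ,n)`.
-/

open Finset Function

lemma Nat.card_subtype_eq_one_iff {α : Type*} {p : α → Prop} :
    Nat.card {a // p a} = 1 ↔ ∃! a, p a := by
  rw [Nat.card_eq_one_iff_unique, ← unique_subtype_iff_existsUnique,
    unique_iff_subsingleton_and_nonempty]

section NoSingletonFiber

variable {α β α' β' : Type*}

def NoSingletonFiber (f : α → β) : Prop :=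
  ∀ b, Nat.card {a // f a = b} ≠ 1

lemma natCard_noSingletonFiber_congr (eα : α ≃ α') (eβ : β ≃ β') :
    Nat.card {f : α → β // NoSingletonFiber f} =
      Nat.card {f : α' → β' // NoSingletonFiber f} := by
  refine Nat.card_congr ((eα.arrowCongr eβ).subtypeEquiv fun f => ?_)
  have fiber (b : β) :
      Nat.card {a' // eα.arrowCongr eβ f a' = eβ b} = Nat.card {a // f a = b} :=
    (Nat.card_congr (eα.subtypeEquiv fun a => by simp)).symm
  exact eβ.forall_congr fun b => by rw [fiber]

end NoSingletonFiber

def matrixOfFun {l n : ℕ} (f : Fin n → Fin l) : Fin l → Fin n → Bool :=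
  fun i j => decide (f j = i)

lemma matrixOfFun_injective {l n : ℕ} : Injective (matrixOfFun (l := l) (n := n)) := by
  intro f g h
  funext j
  simpa [matrixOfFun] using congrFun (congrFun h (g j)) j

lemma isS_iff_exists_matrixOfFun {l n : ℕ} {M : Fin l → Fin n → Bool} :
    isS M ↔ ∃ f, matrixOfFun f = M := by
  constructor
  · intro hM
    choose f hf using fun j => card_eq_one.mp (hM j)
    refine ⟨f, funext fun i => funext fun j => ?_⟩
    have := congrArg (i ∈ ·) (hf j)
    simp only [mem_filter, mem_univ, true_and, mem_singleton] at this
    rw [Bool.eq_iff_iff]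
    simp [matrixOfFun, this, eq_comm]
  · rintro ⟨f, rfl⟩ j
    simp [colWt, matrixOfFun, eq_comm, filter_eq']

lemma isStop_matrixOfFun_iff {l n : ℕ} {f : Fin n → Fin l} :
    isStop (matrixOfFun f) ↔ NoSingletonFiber f := by
  simp [isStop, NoSingletonFiber, rowWt, matrixOfFun, Nat.card_eq_fintype_card,
    Fintype.card_subtype]

lemma z_eq_natCard (l n : ℕ) : z l n = Nat.card {f : Fin n → Fin l // NoSingletonFiber f} := by
  rw [z, ← Nat.card_eq_fintype_card]
  let toMatrix (f : {f : Fin n → Fin l // NoSingletonFiber f}) :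
      {M : Fin l → Fin n → Bool // isS M ∧ isStop M} :=
    ⟨matrixOfFun f, isS_iff_exists_matrixOfFun.mpr ⟨f, rfl⟩, isStop_matrixOfFun_iff.mpr f.2⟩
  refine (Nat.card_eq_of_bijective toMatrix ⟨?_, ?_⟩).symm
  · exact fun f g h => Subtype.ext (matrixOfFun_injective (congrArg Subtype.val h))
  · rintro ⟨M, hS, hStop⟩
    obtain ⟨f, rfl⟩ := isS_iff_exists_matrixOfFun.mp hS
    exact ⟨⟨f, isStop_matrixOfFun_iff.mp hStop⟩, rfl⟩

lemma natCard_noSingletonFiber_eq_z {α β : Type*} [Finite α] [Finite β] :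
    Nat.card {f : α → β // NoSingletonFiber f} = z (Nat.card β) (Nat.card α) := by
  rw [z_eq_natCard]
  exact natCard_noSingletonFiber_congr (Finite.equivFin α) (Finite.equivFin β)

lemma z_zero_right (l : ℕ) : z l 0 = 1 := by
  have all (f : Fin 0 → Fin l) : NoSingletonFiber f := fun b => by simp
  rw [z_eq_natCard, Nat.card_congr (Equiv.subtypeUnivEquiv all), Nat.card_fun]
  simp

lemma z_zero_left {n : ℕ} (hn : n ≠ 0) : z 0 n = 0 := by
  obtain ⟨m, rfl⟩ := Nat.exists_eq_succ_of_ne_zero hn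
  rw [z_eq_natCard, Nat.card_of_isEmpty]

section SingletonFibers

variable {α β : Type*}

open Classical in
noncomputable def singletonFibers [Fintype β] (f : α → β) : Finset β :=
  {b | Nat.card {a // f a = b} = 1}

lemma mem_singletonFibers [Fintype β] {f : α → β} {b : β} :
    b ∈ singletonFibers f ↔ Nat.card {a // f a = b} = 1 := by
  simp [singletonFibers]

variable {R : Finset β} {f : α → β}

lemma existsUnique_embedding_of_singletonFibers_eq [Fintype β] (hf : singletonFibers f = R) :
    ∃! σ : R ↪ α, ∀ b : R, f (σ b) = b := by
  have unique (b : R) : ∃! a, f a = b :=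
    Nat.card_subtype_eq_one_iff.mp (mem_singletonFibers.mp (hf ▸ b.2))
  choose σ hσ using fun b => (unique b).exists
  refine ⟨⟨σ, .of_comp (f := f) ?_⟩, hσ, fun τ hτ => ?_⟩
  · simpa only [Function.comp_def, hσ] using Subtype.val_injective
  · exact DFunLike.ext _ _ fun b => (unique b).unique (hτ b) (hσ b)

variable {σ : R ↪ α}

lemma notMem_range_of_apply_notMem (hσ : ∀ b : R, f (σ b) = b) {a : α} (ha : f a ∉ R) :
    a ∉ Set.range σ := by
  rintro ⟨b, rfl⟩
  exact ha (hσ b ▸ b.2)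

lemma singletonFibers_eq_iff [Fintype β] (hσ : ∀ b : R, f (σ b) = b) :
    singletonFibers f = R ↔
      (∀ a ∉ Set.range σ, f a ∉ R) ∧ ∀ b ∉ R, Nat.card {a // f a = b} ≠ 1 := by
  constructor
  · rintro rfl
    refine ⟨fun a ha hfa => ha ?_, fun b hb h => hb (mem_singletonFibers.mpr h)⟩
    obtain ⟨a', -, h⟩ := Nat.card_subtype_eq_one_iff.mp (mem_singletonFibers.mp hfa)
    exact ⟨⟨f a, hfa⟩, (h _ (hσ _)).trans (h a rfl).symm⟩
  · rintro ⟨hout, hno⟩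
    ext b
    rw [mem_singletonFibers]
    by_cases hb : b ∈ R
    · refine iff_of_true (Nat.card_subtype_eq_one_iff.mpr ⟨σ ⟨b, hb⟩, hσ _, ?_⟩) hb
      rintro a rfl
      by_cases ha : a ∈ Set.range σ
      · obtain ⟨b', rfl⟩ := ha
        exact congrArg σ (Subtype.ext (hσ b')).symm
      · exact absurd hb (hout a ha)
    · exact iff_of_false (hno b hb) hb

lemma natCard_fiber_compl_range (hσ : ∀ b : R, f (σ b) = b) {b : β} (hb : b ∉ R) :
    Nat.card {a : {a // a ∉ Set.range σ} // f a = b} = Nat.card {a // f a = b} :=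
  Nat.card_congr <| Equiv.subtypeSubtypeEquivSubtype (p := (· ∉ Set.range σ))
    (q := (f · = b)) fun ha => notMem_range_of_apply_notMem hσ (by rwa [ha])

variable (σ) in
open Classical in
noncomputable def restrictEquiv :
    {f : α → β // (∀ b : R, f (σ b) = b) ∧ ∀ a ∉ Set.range σ, f a ∉ R} ≃
      ({a // a ∉ Set.range σ} → {b // b ∉ R}) where
  toFun f a := ⟨f.1 a, f.2.2 a a.2⟩
  invFun g := ⟨fun a => if h : a ∈ Set.range σ then (Equiv.ofInjective σ σ.injective).symm ⟨a, h⟩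
      else g ⟨a, h⟩, fun b => by simp, fun a ha => by simpa [ha] using (g ⟨a, ha⟩).2⟩
  left_inv f := by
    ext a
    by_cases ha : a ∈ Set.range σ
    · obtain ⟨b, rfl⟩ := ha
      simp [f.2.1 b]
    · simp [ha]
  right_inv g := by
    ext a
    simp [a.2]

lemma noSingletonFiber_restrictEquiv_iff
    (f : {f : α → β // (∀ b : R, f (σ b) = b) ∧ ∀ a ∉ Set.range σ, f a ∉ R}) :
    NoSingletonFiber (restrictEquiv σ f) ↔ ∀ b ∉ R, Nat.card {a // f.1 a = b} ≠ 1 := by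
  have fiber (b : {b // b ∉ R}) :
      Nat.card {a // restrictEquiv σ f a = b} = Nat.card {a // f.1 a = b} := by
    rw [← natCard_fiber_compl_range f.2.1 b.2]
    exact Nat.card_congr (Equiv.subtypeEquivRight fun a => Subtype.ext_iff)
  simp only [NoSingletonFiber, fiber, Subtype.forall]

lemma natCard_singletonFibers_eq_and_leftInverse [Fintype β] (σ : R ↪ α) :
    Nat.card {f : α → β // singletonFibers f = R ∧ ∀ b : R, f (σ b) = b} =
      Nat.card {g : {a // a ∉ Set.range σ} → {b // b ∉ R} // NoSingletonFiber g} := by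
  have h {f : α → β} (hf : singletonFibers f = R ∧ ∀ b : R, f (σ b) = b) :
      (∀ b : R, f (σ b) = b) ∧ ∀ a ∉ Set.range σ, f a ∉ R :=
    ⟨hf.2, ((singletonFibers_eq_iff hf.2).mp hf.1).1⟩
  calc _ = Nat.card {f : {f : α → β // (∀ b : R, f (σ b) = b) ∧ ∀ a ∉ Set.range σ, f a ∉ R} //
          NoSingletonFiber (restrictEquiv σ f)} := by
        refine Nat.card_congr ((Equiv.subtypeSubtypeEquivSubtype h).symm.trans
          (Equiv.subtypeEquivRight fun f => ?_))
        rw [noSingletonFiber_restrictEquiv_iff, singletonFibers_eq_iff f.2.1]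
        exact ⟨fun hf => hf.1.2, fun hno => ⟨⟨f.2.2, hno⟩, f.2.1⟩⟩
    _ = _ := Nat.card_congr ((restrictEquiv σ).subtypeEquiv fun _ => Iff.rfl)

end SingletonFibers

lemma natCard_singletonFibers_eq_sum {α β : Type*} [Fintype α] [DecidableEq α] [Fintype β]
    [DecidableEq β] (R : Finset β) :
    Nat.card {f : α → β // singletonFibers f = R} =
      ∑ σ : R ↪ α, Nat.card {f : α → β // singletonFibers f = R ∧ ∀ b : R, f (σ b) = b} := by
  rw [← Nat.card_sigma]
  refine (Nat.card_eq_of_bijective (fun p => ⟨p.2.1, p.2.2.1⟩) ⟨?_, ?_⟩).symm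
  · rintro ⟨σ, f, hf, hσ⟩ ⟨τ, g, _, hτ⟩ hfg
    obtain rfl : f = g := congrArg Subtype.val hfg
    obtain rfl : σ = τ := (existsUnique_embedding_of_singletonFibers_eq hf).unique hσ hτ
    rfl
  · rintro ⟨f, hf⟩
    obtain ⟨σ, hσ, -⟩ := existsUnique_embedding_of_singletonFibers_eq hf
    exact ⟨⟨σ, f, hf, hσ⟩, rfl⟩

open Fintype in
lemma natCard_singletonFibers_eq {α β : Type*} [Fintype α] [Fintype β] (R : Finset β) :
    Nat.card {f : α → β // singletonFibers f = R} =
      (card α).descFactorial #R * z (card β - #R) (card α - #R) := by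
  classical
  have summand (σ : R ↪ α) :
      Nat.card {f : α → β // singletonFibers f = R ∧ ∀ b : R, f (σ b) = b} =
        z (card β - #R) (card α - #R) := by
    have card_rows : Nat.card {b // b ∉ R} = card β - #R := by
      rw [Nat.card_eq_fintype_card, card_subtype_compl, card_coe]
    have card_cols : Nat.card {a // a ∉ Set.range σ} = card α - #R := by
      rw [Nat.card_eq_fintype_card, card_subtype_compl, ← Set.toFinset_card]
      simp [card_image_of_injective _ σ.injective]
    rw [natCard_singletonFibers_eq_and_leftInverse, natCard_noSingletonFiber_eq_z, card_rows,
      card_cols]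
  rw [natCard_singletonFibers_eq_sum, sum_congr rfl fun σ _ => summand σ, sum_const, card_univ,
    card_embedding_eq, card_coe, smul_eq_mul]

open Fintype in
lemma card_pow_card_eq_sum (α β : Type*) [Fintype α] [Fintype β] :
    card β ^ card α = ∑ c ∈ range (card β + 1),
      (card β).choose c * ((card α).descFactorial c * z (card β - c) (card α - c)) := by
  classical
  rw [← card_fun, ← Nat.card_eq_fintype_card,
    ← Nat.card_congr (Equiv.sigmaFiberEquiv (singletonFibers (α := α) (β := β))), Nat.card_sigma]
  simp only [natCard_singletonFibers_eq, ← powerset_univ]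
  rw [sum_powerset_apply_card (fun c => (card α).descFactorial c * z (card β - c) (card α - c)),
    card_univ]
  rfl

lemma sum_choose_mul_descFactorial_mul (l n : ℕ) (w : ℕ → ℕ) :
    ∑ c ∈ range (l + 1), l.choose c * (n.descFactorial c * w c) =
      w 0 + ∑ c ∈ Icc 1 (min l n), c.factorial * l.choose c * n.choose c * w c := by
  rw [range_eq_Ico, sum_eq_sum_Ico_succ_bot (Nat.succ_pos l)]
  simp only [Nat.choose_zero_right, Nat.descFactorial_zero, one_mul, zero_add]
  congr 1
  calc ∑ c ∈ Ico 1 (l + 1), l.choose c * (n.descFactorial c * w c)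
      = ∑ c ∈ Ico 1 (l + 1), c.factorial * l.choose c * n.choose c * w c :=
        sum_congr rfl fun c _ => by rw [Nat.descFactorial_eq_factorial_mul_choose]; ring
    _ = _ := by
        refine (sum_subset (fun c hc => ?_) fun c hc hc' => ?_).symm
        · simp only [mem_Icc, mem_Ico] at hc ⊢
          omega
        · simp only [mem_Icc, mem_Ico, not_and, not_le] at hc hc'
          rw [Nat.choose_eq_zero_of_lt (n := n) (by omega), mul_zero, zero_mul]

theorem z_recursion :
    (∀ l n : ℕ, 1 ≤ l → 1 ≤ n →
      (z l n : ℤ) = (l : ℤ) ^ n -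
        ∑ c ∈ Finset.Icc 1 (min l n),
          (c.factorial : ℤ) * (l.choose c) * (n.choose c) * z (l - c) (n - c)) ∧
    z 0 0 = 1 ∧ (∀ l : ℕ, z l 0 = 1) ∧ (∀ n : ℕ, 1 ≤ n → z 0 n = 0) := by
  refine ⟨fun l n _ _ => ?_, z_zero_right 0, z_zero_right, fun n hn => z_zero_left (by omega)⟩
  have partition := card_pow_card_eq_sum (Fin n) (Fin l)
  simp only [Fintype.card_fin, sum_choose_mul_descFactorial_mul, Nat.sub_zero] at partition
  rw [eq_sub_iff_add_eq]
  exact_mod_cast partition.symm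
end

section
/- For M in S^(ℓ,n) with pivot set of cardinality c ≥ 1, the matrix M' obtained from M by deleting all rows i and columns j such that (i,j) ∈ piv(M) is an (ℓ−c)×(n−c) matrix lying in S^(ℓ−c,n−c) and is a stopping matrix (has no row of weight 1). -/
/-- The set of pivots of `M`: pairs `(i,j)` with `M i j = 1` and row `i` of weight 1. -/
def pivSet {l n : ℕ} (M : Fin l → Fin n → Bool) : Finset (Fin l × Fin n) :=
  Finset.univ.filter (fun p => M p.1 p.2 ∧ rowWt M p.1 = 1)

lemma row_unique {l n : ℕ} (M : Fin l → Fin n → Bool) {i : Fin l}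
    (h : rowWt M i = 1) {j j' : Fin n} (hj : M i j) (hj' : M i j') : j = j' := by
  obtain ⟨a, ha⟩ := Finset.card_eq_one.mp h
  have h1 : j ∈ Finset.univ.filter (fun j => M i j) := by simp [hj]
  have h2 : j' ∈ Finset.univ.filter (fun j => M i j) := by simp [hj']
  rw [ha, Finset.mem_singleton] at h1 h2
  rw [h1, h2]

lemma col_unique {l n : ℕ} (M : Fin l → Fin n → Bool) {j : Fin n}
    (h : colWt M j = 1) {i i' : Fin l} (hi : M i j) (hi' : M i' j) : i = i' := by
  obtain ⟨a, ha⟩ := Finset.card_eq_one.mp h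
  have h1 : i ∈ Finset.univ.filter (fun i => M i j) := by simp [hi]
  have h2 : i' ∈ Finset.univ.filter (fun i => M i j) := by simp [hi']
  rw [ha, Finset.mem_singleton] at h1 h2
  rw [h1, h2]

lemma col_exists {l n : ℕ} (M : Fin l → Fin n → Bool) {j : Fin n}
    (h : colWt M j = 1) : ∃ i, M i j := by
  obtain ⟨a, ha⟩ := Finset.card_eq_one.mp h
  have : a ∈ Finset.univ.filter (fun i => M i j) := by rw [ha]; simp
  exact ⟨a, (Finset.mem_filter.mp this).2⟩
/-- Deleting all pivot rows and columns from `M` yields a stopping matrix in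
`S^(l-c, n-c)`, expressed via the surviving row set `Rs` and column set `Cs`. -/
theorem delete_pivots_stopping {l n c : ℕ} (M : Fin l → Fin n → Bool)
    (hM : isS M) (hc1 : 1 ≤ c) (hc : (pivSet M).card = c) :
    let Rs : Finset (Fin l) := Finset.univ.filter (fun i => ∀ j, (i, j) ∉ pivSet M)
    let Cs : Finset (Fin n) := Finset.univ.filter (fun j => ∀ i, (i, j) ∉ pivSet M)
    Rs.card = l - c ∧ Cs.card = n - c ∧
    (∀ j ∈ Cs, (Rs.filter (fun i => M i j)).card = 1) ∧
    (∀ i ∈ Rs, (Cs.filter (fun j => M i j)).card ≠ 1) := by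
  intro Rs Cs
  have hmem : ∀ p : Fin l × Fin n, p ∈ pivSet M ↔ M p.1 p.2 ∧ rowWt M p.1 = 1 := by
    intro p; simp [pivSet]
  -- card of row image
  have hfst : ((pivSet M).image Prod.fst).card = c := by
    rw [Finset.card_image_of_injOn, hc]
    intro p hp q hq hpq
    simp only [Finset.mem_coe, hmem] at hp hq
    have h2 : p.2 = q.2 := by
      apply row_unique M hp.2 hp.1
      rw [hpq]; exact hq.1
    exact Prod.ext hpq h2
  have hsnd : ((pivSet M).image Prod.snd).card = c := by
    rw [Finset.card_image_of_injOn, hc]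
    intro p hp q hq hpq
    simp only [Finset.mem_coe, hmem] at hp hq
    have h1 : p.1 = q.1 := by
      apply col_unique M (hM p.2) hp.1
      rw [hpq]; exact hq.1
    exact Prod.ext h1 hpq
  have hRimg : Finset.univ.filter (fun i => ¬ ∀ j, (i, j) ∉ pivSet M)
      = (pivSet M).image Prod.fst := by
    ext i
    simp only [Finset.mem_filter, Finset.mem_univ, true_and, Finset.mem_image]
    push_neg
    constructor
    · rintro ⟨j, hj⟩; exact ⟨(i, j), hj, rfl⟩
    · rintro ⟨⟨a, b⟩, h, rfl⟩; exact ⟨b, h⟩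
  have hCimg : Finset.univ.filter (fun j => ¬ ∀ i, (i, j) ∉ pivSet M)
      = (pivSet M).image Prod.snd := by
    ext j
    simp only [Finset.mem_filter, Finset.mem_univ, true_and, Finset.mem_image]
    push_neg
    constructor
    · rintro ⟨i, hi⟩; exact ⟨(i, j), hi, rfl⟩
    · rintro ⟨⟨a, b⟩, h, rfl⟩; exact ⟨a, h⟩
  have hRcard : Rs.card = l - c := by
    show (Finset.univ.filter (fun i => ∀ j, (i, j) ∉ pivSet M)).card = l - c
    have hadd := Finset.card_filter_add_card_filter_not
      (s := (Finset.univ : Finset (Fin l))) (p := fun i => ∀ j, (i, j) ∉ pivSet M)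
    rw [hRimg, hfst, Finset.card_univ, Fintype.card_fin] at hadd
    omega
  have hCcard : Cs.card = n - c := by
    show (Finset.univ.filter (fun j => ∀ i, (i, j) ∉ pivSet M)).card = n - c
    have hadd := Finset.card_filter_add_card_filter_not
      (s := (Finset.univ : Finset (Fin n))) (p := fun j => ∀ i, (i, j) ∉ pivSet M)
    rw [hCimg, hsnd, Finset.card_univ, Fintype.card_fin] at hadd
    omega
  refine ⟨hRcard, hCcard, ?_, ?_⟩
  · intro j hj
    have hC : ∀ i, (i, j) ∉ pivSet M := (Finset.mem_filter.mp hj).2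
    obtain ⟨i, hi⟩ := col_exists M (hM j)
    have : Rs.filter (fun i => M i j) = {i} := by
      ext i'
      simp only [Finset.mem_filter, Finset.mem_singleton, Rs, Finset.mem_univ, true_and]
      constructor
      · rintro ⟨_, hi'⟩
        exact col_unique M (hM j) hi' hi
      · rintro rfl
        refine ⟨?_, hi⟩
        intro j' hj'
        rw [hmem] at hj'
        have : j' = j := row_unique M hj'.2 hj'.1 hi
        subst this
        exact hC i' (by rw [hmem]; exact hj')
    rw [this, Finset.card_singleton]
  · intro i hi heq
    have hR : ∀ j, (i, j) ∉ pivSet M := (Finset.mem_filter.mp hi).2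
    have hsub : Cs.filter (fun j => M i j) = Finset.univ.filter (fun j => M i j) := by
      ext j
      simp only [Finset.mem_filter, Finset.mem_univ, true_and, Cs]
      constructor
      · rintro ⟨_, h⟩; exact h
      · intro h
        refine ⟨?_, h⟩
        intro i' hi'
        rw [hmem] at hi'
        have : i' = i := col_unique M (hM j) hi'.1 h
        subst this
        exact hR j (by rw [hmem]; exact hi')
    rw [hsub] at heq
    have hrw : rowWt M i = 1 := heq
    obtain ⟨a, ha⟩ := Finset.card_eq_one.mp hrw
    have : a ∈ Finset.univ.filter (fun j => M i j) := by rw [ha]; simp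
    have hMa : M i a := (Finset.mem_filter.mp this).2
    exact hR a (by rw [hmem]; exact ⟨hMa, hrw⟩)
end

section
/- Let B = (M_1,…,M_k)^T with each M_i drawn independently and uniformly from S^(ℓ,n), for ℓ,n,k ≥ 1. Then the probability P_f(ℓ,n,k) that B contains a stopping set (i.e., some nonempty I ⊆ {1,…,n} such that B_I is a stopping matrix) satisfies P_f(ℓ,n,k) ≤ Σ_{i=2}^{n} C(n,i) (z(ℓ,i)/ℓ^i)^k. -/
/-- The submatrix of the stacked matrix `B` on columns `I` is a stopping matrix. -/
def stopOn {l n k : ℕ} (B : Fin k → {M : Fin l → Fin n → Bool // isS M})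
    (I : Finset (Fin n)) : Prop :=
  ∀ a : Fin k, ∀ i : Fin l, (I.filter (fun j => (B a).1 i j)).card ≠ 1

instance {l n k : ℕ} (I : Finset (Fin n)) :
    DecidablePred (fun B : Fin k → {M : Fin l → Fin n → Bool // isS M} => stopOn B I) :=
  fun _ => inferInstanceAs (Decidable (∀ _, ∀ _, _ ≠ _))

/-!
Encode a matrix of `S^(l,n)` by the map `Fin n → Fin l` sending each column to the row of its
unique one. A set `I` of columns is then stopping for that matrix iff no row is hit exactly once
on `I`. Counting such maps splits into the columns in `I`, which form a stopping matrix
(`z(l,|I|)` choices), and the free columns outside `I` (`l ^ (n - |I|)` choices); the `k` blocks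
are independent, so `I` is a stopping set of `B` with probability `(z(l,|I|) / l^|I|)^k`. A union
bound over the nonempty `I`, grouped by `|I|`, gives the claim, the term `|I| = 1` vanishing
because `z(l,1) = 0`.
-/

open Finset

section StoppingSet

variable {α β : Type*} [DecidableEq β]

def IsStoppingSet (f : α → β) (I : Finset α) : Prop :=
  ∀ b, #{a ∈ I | f a = b} ≠ 1

instance [Fintype β] (f : α → β) (I : Finset α) : Decidable (IsStoppingSet f I) :=
  inferInstanceAs (Decidable (∀ _, _ ≠ _))

lemma isStoppingSet_iff_restrict (f : α → β) (I : Finset α) :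
    IsStoppingSet f I ↔ IsStoppingSet (fun x : I => f x) univ := by
  refine forall_congr' fun b => ?_
  rw [univ_eq_attach, filter_attach (f · = b), card_map, card_attach]

lemma card_isStoppingSet_univ_congr {γ δ : Type*} [Fintype γ] [DecidableEq γ] [Fintype δ]
    [DecidableEq δ] [Fintype β] (e : γ ≃ δ) :
    Fintype.card {f : γ → β // IsStoppingSet f univ} =
      Fintype.card {f : δ → β // IsStoppingSet f univ} := by
  refine Fintype.card_congr ((e.arrowCongr (Equiv.refl β)).subtypeEquiv fun f => ?_)
  refine forall_congr' fun b => ?_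
  rw [card_equiv e (t := {y | e.arrowCongr (Equiv.refl β) f y = b}) fun x => by simp]

lemma card_isStoppingSet [Fintype α] [DecidableEq α] [Fintype β] (I : Finset α) :
    Fintype.card {f : α → β // IsStoppingSet f I} =
      Fintype.card {g : I → β // IsStoppingSet g univ} *
        Fintype.card β ^ (Fintype.card α - #I) := by
  let e := ((Equiv.piEquivPiSubtypeProd (· ∈ I) fun _ => β).subtypeEquiv
    (q := fun p => IsStoppingSet p.1 univ) fun f => isStoppingSet_iff_restrict f I).trans
    (Equiv.prodSubtypeFstEquivSubtypeProd (p := fun g : I → β => IsStoppingSet g univ))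
  rw [Fintype.card_congr e, Fintype.card_prod, Fintype.card_fun, Fintype.card_subtype_compl,
    Fintype.card_coe]

end StoppingSet

lemma card_exists_le_sum_card {α ι : Type*} [Fintype α] [Fintype ι] (q : ι → Prop)
    [DecidablePred q] (p : ι → α → Prop) [∀ i, DecidablePred (p i)]
    [Fintype {x // ∃ i, q i ∧ p i x}] :
    Fintype.card {x // ∃ i, q i ∧ p i x} ≤ ∑ i ∈ univ.filter q, Fintype.card {x // p i x} := by
  classical
  calc Fintype.card {x // ∃ i, q i ∧ p i x}
      = #((univ.filter q).biUnion fun i => {x | p i x}) := by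
        rw [← Fintype.card_coe]
        exact Fintype.card_congr (Equiv.subtypeEquivRight fun x => by simp)
    _ ≤ _ := card_biUnion_le.trans_eq (by simp only [Fintype.card_subtype])

lemma sum_filter_nonempty_eq_sum_choose {α M : Type*} [Fintype α] [AddCommMonoid M]
    (h : ℕ → M) :
    ∑ I ∈ univ.filter (Finset.Nonempty (α := α)), h #I =
      ∑ i ∈ Icc 1 (Fintype.card α), (Fintype.card α).choose i • h i := by
  classical
  rw [← sum_fiberwise_of_maps_to (g := card) (t := Icc 1 (Fintype.card α)) fun I hI => ?_]
  · refine sum_congr rfl fun i hi => ?_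
    have hfiber :
        {I ∈ univ.filter (Finset.Nonempty (α := α)) | #I = i} = powersetCard i univ := by
      ext I
      simp only [mem_filter, mem_univ, true_and, mem_powersetCard_univ, and_iff_right_iff_imp]
      rintro rfl
      exact card_pos.1 (mem_Icc.1 hi).1
    rw [hfiber, sum_congr rfl fun I hI => by rw [(mem_powersetCard_univ.1 hI)], sum_const,
      card_powersetCard, card_univ]
  · exact mem_Icc.2 ⟨card_pos.2 (mem_filter.1 hI).2, card_le_univ I⟩

lemma mul_pow_sub_div_pow {K : Type*} [Field K] (a : K) {c : K} (hc : c ≠ 0) {i n : ℕ}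
    (hi : i ≤ n) (k : ℕ) :
    (a * c ^ (n - i)) ^ k / c ^ (n * k) = (a / c ^ i) ^ k := by
  rw [pow_mul, ← div_pow, ← pow_sub_mul_pow c hi, mul_comm a,
    mul_div_mul_left _ _ (pow_ne_zero _ hc)]

def oneHotEquiv (l n : ℕ) : (Fin n → Fin l) ≃ {M : Fin l → Fin n → Bool // isS M} where
  toFun f := ⟨fun i j => decide (f j = i), fun j => by simp [colWt, filter_eq]⟩
  invFun M j :=
    Fintype.choose (fun i => M.1 i j) ((Fintype.existsUnique_iff_card_one _).2 (M.2 j))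
  left_inv f := funext fun j =>
    (of_decide_eq_true (Fintype.choose_spec (fun i => decide (f j = i) = true) _)).symm
  right_inv M := by
    ext i j
    have h := (Fintype.existsUnique_iff_card_one _).2 (M.2 j)
    have hc := Fintype.choose_spec _ h
    cases hM : M.1 i j
    · simp only [decide_eq_false_iff_not]
      rintro rfl
      simp_all
    · simpa using h.unique hc hM

lemma z_eq_card_isStoppingSet (l m : ℕ) :
    z l m = Fintype.card {f : Fin m → Fin l // IsStoppingSet f univ} :=
  Fintype.card_congr ((Equiv.subtypeSubtypeEquivSubtypeInter isS isStop).symm.trans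
    ((oneHotEquiv l m).subtypeEquiv fun f => by
      simp [isStop, rowWt, IsStoppingSet, oneHotEquiv]).symm)

lemma card_isStoppingSet_univ (γ : Type*) [Fintype γ] [DecidableEq γ] (l : ℕ) :
    Fintype.card {f : γ → Fin l // IsStoppingSet f univ} = z l (Fintype.card γ) := by
  rw [z_eq_card_isStoppingSet, card_isStoppingSet_univ_congr (Fintype.equivFin γ)]

lemma z_one (l : ℕ) : z l 1 = 0 := by
  rw [z_eq_card_isStoppingSet, Fintype.card_eq_zero_iff]
  refine ⟨fun ⟨f, hf⟩ => hf (f 0) ?_⟩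
  simp [Fin.eq_zero]

lemma card_stopOn {l n k : ℕ} (I : Finset (Fin n)) :
    Fintype.card {B : Fin k → {M : Fin l → Fin n → Bool // isS M} // stopOn B I} =
      (z l #I * l ^ (n - #I)) ^ k := by
  let e : {B : Fin k → {M : Fin l → Fin n → Bool // isS M} // stopOn B I} ≃
      (Fin k → {f : Fin n → Fin l // IsStoppingSet f I}) :=
    (Equiv.subtypePiEquivPi (p := fun _ M => ∀ i, #(I.filter fun j => M.1 i j) ≠ 1)).trans
      (Equiv.piCongrRight fun _ => ((oneHotEquiv l n).subtypeEquiv fun f => by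
        simp [IsStoppingSet, oneHotEquiv]).symm)
  rw [Fintype.card_congr e, Fintype.card_fun, card_isStoppingSet, card_isStoppingSet_univ,
    Fintype.card_coe, Fintype.card_fin, Fintype.card_fin, Fintype.card_fin]

theorem listing_failure_union_bound_general (l n k : ℕ) (hl : 1 ≤ l) (hk : 1 ≤ k) :
    (Fintype.card {B : Fin k → {M : Fin l → Fin n → Bool // isS M} //
        ∃ I : Finset (Fin n), I.Nonempty ∧ stopOn B I} : ℚ) / (l : ℚ) ^ (n * k) ≤
    ∑ i ∈ Finset.Icc 2 n, (n.choose i : ℚ) * ((z l i : ℚ) / (l : ℚ) ^ i) ^ k := by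
  have hl0 : (l : ℚ) ≠ 0 := Nat.cast_ne_zero.2 (by omega)
  have hcount := card_exists_le_sum_card (Finset.Nonempty (α := Fin n))
    fun I (B : Fin k → {M : Fin l → Fin n → Bool // isS M}) => stopOn B I
  calc _ ≤ (∑ I ∈ univ.filter Finset.Nonempty, ((z l #I * l ^ (n - #I)) ^ k : ℕ) : ℚ) /
          (l : ℚ) ^ (n * k) := by
        gcongr
        exact_mod_cast hcount.trans_eq (sum_congr rfl fun I _ => card_stopOn I)
    _ = ∑ I ∈ univ.filter Finset.Nonempty, ((z l #I : ℚ) / (l : ℚ) ^ #I) ^ k := by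
        push_cast
        rw [sum_div]
        exact sum_congr rfl fun I _ =>
          mul_pow_sub_div_pow _ hl0 ((card_le_univ I).trans_eq (Fintype.card_fin n)) k
    _ = ∑ i ∈ Icc 1 n, (n.choose i : ℚ) * ((z l i : ℚ) / (l : ℚ) ^ i) ^ k := by
        rw [sum_filter_nonempty_eq_sum_choose fun i => ((z l i : ℚ) / (l : ℚ) ^ i) ^ k,
          Fintype.card_fin]
        simp only [nsmul_eq_mul]
    _ = _ := by
        refine (sum_subset (Icc_subset_Icc_left one_le_two) fun i hi hi2 => ?_).symm
        obtain rfl : i = 1 := by simp only [mem_Icc, not_and, not_le] at hi hi2; omega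
        simp [z_one, zero_pow (by omega : k ≠ 0)]

/-- Union bound on the listing failure probability. -/
theorem listing_failure_union_bound (l n k : ℕ) (hl : 1 ≤ l) (hn : 1 ≤ n) (hk : 1 ≤ k) :
    (Fintype.card {B : Fin k → {M : Fin l → Fin n → Bool // isS M} //
        ∃ I : Finset (Fin n), I.Nonempty ∧ stopOn B I} : ℚ) / (l : ℚ) ^ (n * k) ≤
    ∑ i ∈ Finset.Icc 2 n, (n.choose i : ℚ) * ((z l i : ℚ) / (l : ℚ) ^ i) ^ k :=
  listing_failure_union_bound_general l n k hl hk
end
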